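/- Suppose M_r ∈ ℝ^{ρ_r×p} satisfies (1−δ)‖z‖₂² ≤ (p/ρ_r)‖M_r z‖₂² ≤ (1+δ)‖z‖₂² for all z ∈ span(P_{k_r}), with δ ∈ (0,1), and assume λ_{k_r+1} > 0. Let Ū ∈ ℝ^{p×k} have all columns in span(P_{k_r}) and set Ũ = M_r Ū. Let U° be a minimizer of tr(U^⊤ L_r U) over all U ∈ ℝ^{p×k} with M_r U = Ũ, and set U* = P_{k_r} P_{k_r}^⊤ U°. Then ‖U* − Ū‖_F ≤ √(2p/(ρ_r(1−δ))) √(λ_{k_r}/λ_{k_r+1}) ‖Ū‖_F. -/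

import Mathlib

/-!
Write `Π = P_{k_r} P_{k_r}ᵀ` and `W = Π U° - Ū`. Since `Π Ū = Ū`, `W` lies in `span P_{k_r}`, so the
restricted isometry gives `(1 - δ) ‖W‖² ≤ (p / ρ_r) ‖M_r W‖²`; since `M_r U° = M_r Ū`, also
`M_r W = -M_r (U° - Π U°)`, and a row selection does not increase the Frobenius norm.
In the eigenbasis of `L_r`, minimality of `U°` against the feasible `Ū` gives
`λ_{k_r+1} ‖U° - Π U°‖² ≤ tr(U°ᵀ L_r U°) ≤ tr(Ūᵀ L_r Ū) ≤ λ_{k_r} ‖Ū‖²`.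
Chaining the two bounds gives `‖W‖² ≤ p λ_{k_r} / (ρ_r (1 - δ) λ_{k_r+1}) ‖Ū‖²`.
-/

open Matrix

/-- Frobenius norm of a real matrix. -/
noncomputable def frobNorm {m n : Type*} [Fintype m] [Fintype n] (A : Matrix m n ℝ) : ℝ :=
  Real.sqrt (∑ i, ∑ j, (A i j) ^ 2)

/-- Euclidean norm of a real vector. -/
noncomputable def vecNorm {n : Type*} [Fintype n] (x : n → ℝ) : ℝ :=
  Real.sqrt (∑ i, (x i) ^ 2)

/-- A row-selection matrix: its rows are distinct standard basis vectors of `ℝ^p`. -/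
def IsRowSelection {ρ p : ℕ} (M : Matrix (Fin ρ) (Fin p) ℝ) : Prop :=
  ∃ f : Fin ρ → Fin p, Function.Injective f ∧ ∀ i j, M i j = if j = f i then 1 else 0

/-- A column-selection matrix: its columns are distinct standard basis vectors of `ℝ^n`. -/
def IsColSelection {n ρ : ℕ} (M : Matrix (Fin n) (Fin ρ) ℝ) : Prop :=
  ∃ f : Fin ρ → Fin n, Function.Injective f ∧ ∀ i j, M i j = if i = f j then 1 else 0

/-- `y` lies in the span of the columns of `P`. -/
def inColSpan {p k : ℕ} (P : Matrix (Fin p) (Fin k) ℝ) (y : Fin p → ℝ) : Prop :=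
  ∃ c : Fin k → ℝ, y = P.mulVec c

/-- `Y ∈ LR(P, Q)`: every column of `Y` lies in the column span of `P` and every row of `Y`
lies in the column span of `Q`. -/
def memLR {p n kr kc : ℕ} (P : Matrix (Fin p) (Fin kr) ℝ) (Q : Matrix (Fin n) (Fin kc) ℝ)
    (Y : Matrix (Fin p) (Fin n) ℝ) : Prop :=
  (∀ j, inColSpan P (fun i => Y i j)) ∧ (∀ i, inColSpan Q (fun j => Y i j))

/-- Graph cumulative coherence `ν = max_i √n ‖Q^⊤ e_i‖₂`. -/
noncomputable def coherence {n k : ℕ} (Q : Matrix (Fin n) (Fin k) ℝ) : ℝ :=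
  ⨆ i : Fin n, Real.sqrt n * vecNorm (fun j => Q i j)

open Finset

section FrobeniusNorm

variable {ι m n : Type*} [Fintype ι] [Fintype m] [Fintype n]

lemma vecNorm_sq (x : n → ℝ) : vecNorm x ^ 2 = ∑ i, x i ^ 2 :=
  Real.sq_sqrt (by positivity)

lemma frobNorm_sq (A : Matrix m n ℝ) : frobNorm A ^ 2 = ∑ i, ∑ j, A i j ^ 2 :=
  Real.sq_sqrt (by positivity)

lemma frobNorm_sq_eq_sum_vecNorm_sq (A : Matrix m n ℝ) :
    frobNorm A ^ 2 = ∑ j, vecNorm (fun i => A i j) ^ 2 := by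
  simp only [frobNorm_sq, vecNorm_sq]
  exact Finset.sum_comm

lemma frobNorm_sub_comm (A B : Matrix m n ℝ) : frobNorm (A - B) = frobNorm (B - A) := by
  rw [← neg_sub B A]
  simp only [frobNorm, Matrix.neg_apply, neg_sq]

lemma frobNorm_eq_sqrt_trace (A : Matrix m n ℝ) : frobNorm A = √(trace (Aᵀ * A)) := by
  simp only [frobNorm, trace, Matrix.diag, mul_apply, transpose_apply, sq]
  rw [Finset.sum_comm]

lemma frobNorm_mul_of_transpose_mul_self [DecidableEq m] {P : Matrix ι m ℝ} (hP : Pᵀ * P = 1)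
    (X : Matrix m n ℝ) : frobNorm (P * X) = frobNorm X := by
  rw [frobNorm_eq_sqrt_trace, frobNorm_eq_sqrt_trace, transpose_mul, Matrix.mul_assoc,
    ← Matrix.mul_assoc Pᵀ, hP, Matrix.one_mul]

lemma trace_transpose_mul_diagonal_mul [DecidableEq m] (d : m → ℝ) (Y : Matrix m n ℝ) :
    trace (Yᵀ * diagonal d * Y) = ∑ i, d i * ∑ j, Y i j ^ 2 := by
  simp only [trace, Matrix.diag, mul_apply (M := Yᵀ * diagonal d), mul_diagonal, transpose_apply,
    Finset.mul_sum]
  rw [Finset.sum_comm]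
  exact Finset.sum_congr rfl fun i _ => Finset.sum_congr rfl fun j _ => by ring

lemma frobNorm_sq_diagonal_indicator_mul [DecidableEq m] (S : Finset m) (Y : Matrix m n ℝ) :
    frobNorm (diagonal (fun i => if i ∈ S then (1 : ℝ) else 0) * Y) ^ 2 =
      ∑ i ∈ S, ∑ j, Y i j ^ 2 := by
  simp [frobNorm_sq, diagonal_mul, ite_mul, Finset.sum_ite_mem]

lemma mul_frobNorm_sq_le_of_forall_col {a b : ℝ} (M : Matrix m n ℝ) (W : Matrix n ι ℝ)
    (h : ∀ j, a * vecNorm (fun i => W i j) ^ 2 ≤ b * vecNorm (M *ᵥ fun i => W i j) ^ 2) :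
    a * frobNorm W ^ 2 ≤ b * frobNorm (M * W) ^ 2 := by
  have hcol : ∀ j, (M *ᵥ fun i => W i j) = fun i => (M * W) i j := fun j => by
    ext i
    simp [mulVec, dotProduct, mul_apply]
  rw [frobNorm_sq_eq_sum_vecNorm_sq, frobNorm_sq_eq_sum_vecNorm_sq, Finset.mul_sum, Finset.mul_sum]
  exact Finset.sum_le_sum fun j _ => hcol j ▸ h j

lemma IsRowSelection.frobNorm_mul_le {ρ p : ℕ} {M : Matrix (Fin ρ) (Fin p) ℝ}
    (hM : IsRowSelection M) (X : Matrix (Fin p) n ℝ) : frobNorm (M * X) ≤ frobNorm X := by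
  obtain ⟨f, hf, hMf⟩ := hM
  have hrow : ∀ i j, (M * X) i j = X (f i) j := fun i j => by
    simp [mul_apply, hMf]
  refine Real.sqrt_le_sqrt ?_
  simp only [hrow]
  calc ∑ i, ∑ j, X (f i) j ^ 2 = ∑ a ∈ univ.map ⟨f, hf⟩, ∑ j, X a j ^ 2 :=
      (Finset.sum_map univ ⟨f, hf⟩ fun a => ∑ j, X a j ^ 2).symm
    _ ≤ ∑ a, ∑ j, X a j ^ 2 :=
      Finset.sum_le_sum_of_subset_of_nonneg (subset_univ _) fun _ _ _ => by positivity

end FrobeniusNorm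

section Eigenbasis

variable {ι n : Type*} [Fintype ι] [DecidableEq ι] {L P : Matrix ι ι ℝ} {ev : ι → ℝ}

noncomputable def spectralProj (P : Matrix ι ι ℝ) (S : Finset ι) : Matrix ι ι ℝ :=
  P * diagonal (fun i => if i ∈ S then (1 : ℝ) else 0) * Pᵀ

lemma transpose_mul_mul_eq_diagonal (hP : Pᵀ * P = 1) (hLP : L * P = P * diagonal ev) :
    Pᵀ * L * P = diagonal ev := by
  rw [Matrix.mul_assoc, hLP, ← Matrix.mul_assoc, hP, Matrix.one_mul]

lemma nonneg_of_posSemidef_of_mul_eq_mul_diagonal (hL : L.PosSemidef) (hP : Pᵀ * P = 1)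
    (hLP : L * P = P * diagonal ev) (i : ι) : 0 ≤ ev i := by
  have h := hL.conjTranspose_mul_mul_same P
  rw [conjTranspose_eq_transpose_of_trivial, transpose_mul_mul_eq_diagonal hP hLP] at h
  exact posSemidef_diagonal_iff.mp h i

lemma mul_transpose_mul_cancel (hP : Pᵀ * P = 1) (X : Matrix ι n ℝ) : P * (Pᵀ * X) = X := by
  rw [← Matrix.mul_assoc, mul_eq_one_comm.mp hP, Matrix.one_mul]

lemma transpose_mul_spectralProj_mul (hP : Pᵀ * P = 1) (S : Finset ι) (X : Matrix ι n ℝ) :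
    Pᵀ * (spectralProj P S * X) =
      diagonal (fun i => if i ∈ S then (1 : ℝ) else 0) * (Pᵀ * X) := by
  simp only [spectralProj, Matrix.mul_assoc]
  rw [← Matrix.mul_assoc Pᵀ P, hP, Matrix.one_mul]

lemma sub_spectralProj_mul (hP : Pᵀ * P = 1) (S : Finset ι) (X : Matrix ι n ℝ) :
    X - spectralProj P S * X =
      P * (diagonal (fun i => if i ∈ Sᶜ then (1 : ℝ) else 0) * (Pᵀ * X)) := by
  have hcompl : diagonal (fun i => if i ∈ Sᶜ then (1 : ℝ) else 0) =
      1 - diagonal (fun i => if i ∈ S then (1 : ℝ) else 0) := by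
    ext i j
    by_cases hi : i ∈ S <;> simp [diagonal_apply, one_apply, hi]
  rw [hcompl, Matrix.sub_mul, Matrix.one_mul, Matrix.mul_sub, mul_transpose_mul_cancel hP,
    ← transpose_mul_spectralProj_mul hP, mul_transpose_mul_cancel hP]

variable [Fintype n]

lemma trace_transpose_mul_mul_eq_sum (hP : Pᵀ * P = 1) (hLP : L * P = P * diagonal ev)
    (X : Matrix ι n ℝ) : trace (Xᵀ * L * X) = ∑ i, ev i * ∑ j, (Pᵀ * X) i j ^ 2 := by
  rw [← trace_transpose_mul_diagonal_mul, ← transpose_mul_mul_eq_diagonal hP hLP]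
  conv_lhs => rw [← mul_transpose_mul_cancel hP X]
  simp only [transpose_mul, Matrix.mul_assoc]

lemma mul_frobNorm_sub_spectralProj_sq_le_trace (hP : Pᵀ * P = 1)
    (hLP : L * P = P * diagonal ev) (S : Finset ι) {μ : ℝ} (hS : ∀ i ∈ S, 0 ≤ ev i)
    (hμ : ∀ i ∉ S, μ ≤ ev i) (X : Matrix ι n ℝ) :
    μ * frobNorm (X - spectralProj P S * X) ^ 2 ≤ trace (Xᵀ * L * X) := by
  set Y := Pᵀ * X
  have hr : ∀ i, 0 ≤ ∑ j, Y i j ^ 2 := fun i => by positivity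
  rw [sub_spectralProj_mul hP, frobNorm_mul_of_transpose_mul_self hP,
    frobNorm_sq_diagonal_indicator_mul, trace_transpose_mul_mul_eq_sum hP hLP, Finset.mul_sum]
  calc ∑ i ∈ Sᶜ, μ * ∑ j, Y i j ^ 2 ≤ ∑ i ∈ Sᶜ, ev i * ∑ j, Y i j ^ 2 :=
        Finset.sum_le_sum fun i hi =>
          mul_le_mul_of_nonneg_right (hμ i (Finset.mem_compl.mp hi)) (hr i)
    _ ≤ ∑ i, ev i * ∑ j, Y i j ^ 2 :=
        Finset.sum_le_sum_of_subset_of_nonneg (subset_univ _) fun i _ hi =>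
          mul_nonneg (hS i (by simpa using hi)) (hr i)

lemma trace_le_mul_frobNorm_sq_of_spectralProj_mul_eq (hP : Pᵀ * P = 1)
    (hLP : L * P = P * diagonal ev) (S : Finset ι) {lam : ℝ} (hlam : ∀ i ∈ S, ev i ≤ lam)
    {X : Matrix ι n ℝ} (hX : spectralProj P S * X = X) :
    trace (Xᵀ * L * X) ≤ lam * frobNorm X ^ 2 := by
  set Y := Pᵀ * X
  have hY : ∀ i ∉ S, ∀ j, Y i j = 0 := fun i hi j => by
    have h := transpose_mul_spectralProj_mul hP S X
    rw [hX] at h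
    simpa [diagonal_mul, hi] using congrFun (congrFun h i) j
  have hPt : Pᵀᵀ * Pᵀ = 1 := by rw [transpose_transpose, mul_eq_one_comm.mp hP]
  rw [trace_transpose_mul_mul_eq_sum hP hLP, ← frobNorm_mul_of_transpose_mul_self hPt,
    frobNorm_sq, Finset.mul_sum]
  refine Finset.sum_le_sum fun i _ => ?_
  by_cases hi : i ∈ S
  · exact mul_le_mul_of_nonneg_right (hlam i hi) (by positivity)
  · simp [Y, hY i hi]

end Eigenbasis

section ColumnSpan

variable {ι κ : Type*} {p r : ℕ}

lemma transpose_submatrix_mul_submatrix [DecidableEq ι] [DecidableEq κ] {m : Type*} [Fintype m]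
    {P : Matrix m ι ℝ} (hP : Pᵀ * P = 1) {e : κ → ι} (he : Function.Injective e) :
    (P.submatrix id e)ᵀ * P.submatrix id e = 1 := by
  rw [transpose_submatrix, ← submatrix_mul _ _ _ _ _ Function.bijective_id, hP,
    submatrix_one _ he]

lemma submatrix_mul_transpose_submatrix_eq_spectralProj [Fintype ι] [DecidableEq ι] [Fintype κ]
    (P : Matrix ι ι ℝ) (e : κ ↪ ι) :
    P.submatrix id e * (P.submatrix id e)ᵀ = spectralProj P (univ.map e) := by
  ext a b
  rw [spectralProj, mul_apply, mul_apply]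
  simp only [mul_diagonal, submatrix_apply, transpose_apply, id, mul_ite, ite_mul, mul_one,
    mul_zero, zero_mul, Finset.sum_ite_mem, univ_inter, Finset.sum_map]

lemma inColSpan_mul_col (Q : Matrix (Fin p) (Fin r) ℝ) (Y : Matrix (Fin r) ι ℝ) (j : ι) :
    inColSpan Q (fun i => (Q * Y) i j) :=
  ⟨fun l => Y l j, by ext i; simp [mulVec, dotProduct, mul_apply]⟩

lemma mul_transpose_mul_eq_self_of_inColSpan {Q : Matrix (Fin p) (Fin r) ℝ} (hQ : Qᵀ * Q = 1)
    {X : Matrix (Fin p) ι ℝ} (hX : ∀ j, inColSpan Q (fun i => X i j)) : Q * Qᵀ * X = X := by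
  choose c hc using hX
  have hXQ : X = Q * of (fun l j => c j l) := by
    ext i j
    simp [congrFun (hc j) i, mulVec, dotProduct, mul_apply]
  rw [hXQ, Matrix.mul_assoc Q, ← Matrix.mul_assoc Qᵀ, hQ, Matrix.one_mul]

end ColumnSpan

lemma mul_frobNorm_sq_le_of_rip {p r ρ k : ℕ} {Q : Matrix (Fin p) (Fin r) ℝ} (hQ : Qᵀ * Q = 1)
    {M : Matrix (Fin ρ) (Fin p) ℝ} (hM : IsRowSelection M) {a b : ℝ} (hb : 0 ≤ b)
    (hRIP : ∀ z, inColSpan Q z → a * vecNorm z ^ 2 ≤ b * vecNorm (M *ᵥ z) ^ 2)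
    {U Ubar : Matrix (Fin p) (Fin k) ℝ} (hUbar : ∀ j, inColSpan Q (fun i => Ubar i j))
    (hfeas : M * U = M * Ubar) :
    a * frobNorm (Q * Qᵀ * U - Ubar) ^ 2 ≤ b * frobNorm (U - Q * Qᵀ * U) ^ 2 := by
  have hfix := mul_transpose_mul_eq_self_of_inColSpan hQ hUbar
  have hW : Q * Qᵀ * U - Ubar = Q * (Qᵀ * (U - Ubar)) := by
    rw [← hfix, ← Matrix.mul_sub, Matrix.mul_assoc, hfix]
  have hMW : M * (Q * Qᵀ * U - Ubar) = M * (Q * Qᵀ * U - U) := by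
    rw [Matrix.mul_sub, Matrix.mul_sub, hfeas]
  calc a * frobNorm (Q * Qᵀ * U - Ubar) ^ 2
      ≤ b * frobNorm (M * (Q * Qᵀ * U - Ubar)) ^ 2 :=
        mul_frobNorm_sq_le_of_forall_col M _ fun j => hRIP _ (hW ▸ inColSpan_mul_col Q _ j)
    _ ≤ b * frobNorm (U - Q * Qᵀ * U) ^ 2 := by
        rw [hMW, frobNorm_sub_comm U]
        exact mul_le_mul_of_nonneg_left
          (pow_le_pow_left₀ (Real.sqrt_nonneg _) (hM.frobNorm_mul_le _) 2) hb

lemma le_sqrt_mul_sqrt_mul_of_sq_le {x y a b : ℝ} (ha : 0 ≤ a) (hy : 0 ≤ y)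
    (h : x ^ 2 ≤ a * b * y ^ 2) : x ≤ √a * √b * y :=
  calc x ≤ |x| := le_abs_self x
    _ ≤ √(a * b * y ^ 2) := Real.abs_le_sqrt h
    _ = √a * √b * y := by rw [Real.sqrt_mul' _ (sq_nonneg y), Real.sqrt_mul ha, Real.sqrt_sq hy]

lemma le_sqrt_mul_sqrt_mul_of_le_of_le {w t u c d lam μ : ℝ} (hc : 0 ≤ c) (hd : 0 < d)
    (hμ : 0 < μ) (hu : 0 ≤ u) (hwt : d * w ^ 2 ≤ c * t ^ 2) (htu : μ * t ^ 2 ≤ lam * u ^ 2) :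
    w ≤ √(c / d) * √(lam / μ) * u := by
  refine le_sqrt_mul_sqrt_mul_of_sq_le (div_nonneg hc hd.le) hu ?_
  calc w ^ 2 ≤ c / d * t ^ 2 := by
        rw [div_mul_eq_mul_div, le_div_iff₀ hd]
        linarith
    _ ≤ c / d * (lam / μ * u ^ 2) := by
        gcongr
        rw [div_mul_eq_mul_div, le_div_iff₀ hμ]
        linarith
    _ = c / d * (lam / μ) * u ^ 2 := by ring

lemma mem_map_castLEEmb_univ_iff {n m : ℕ} (h : n ≤ m) (i : Fin m) :
    i ∈ univ.map (Fin.castLEEmb h) ↔ (i : ℕ) < n := by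
  simp only [mem_map, mem_univ, true_and, Fin.coe_castLEEmb]
  exact ⟨fun ⟨a, ha⟩ => by simp [← ha], fun hi => ⟨⟨i, hi⟩, rfl⟩⟩

/-- The 1-indexed eigenvalues `λ_{k_r}`, `λ_{k_r+1}` of `L_r` are `ev ⟨k_r−1⟩`, `ev ⟨k_r⟩`. -/
theorem approximate_decoder_noiseless_bound
    (p ρr kr k : ℕ) (hkr : kr < p)
    (Lr : Matrix (Fin p) (Fin p) ℝ) (hLr : Lr.PosSemidef)
    (ev : Fin p → ℝ) (hev : Monotone ev)
    (P : Matrix (Fin p) (Fin p) ℝ) (hPorth : Pᵀ * P = 1)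
    (hLrP : Lr * P = P * Matrix.diagonal ev)
    (Pkr : Matrix (Fin p) (Fin kr) ℝ) (hPkr : Pkr = P.submatrix id (Fin.castLE hkr.le))
    (Mr : Matrix (Fin ρr) (Fin p) ℝ) (hMr : IsRowSelection Mr)
    (δ : ℝ) (hδ : δ ∈ Set.Ioo (0 : ℝ) 1)
    (hRIP : ∀ z : Fin p → ℝ, inColSpan Pkr z →
      (1 - δ) * (vecNorm z) ^ 2 ≤ ((p : ℝ) / ρr) * (vecNorm (Mr.mulVec z)) ^ 2 ∧
      ((p : ℝ) / ρr) * (vecNorm (Mr.mulVec z)) ^ 2 ≤ (1 + δ) * (vecNorm z) ^ 2)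
    (hlam1 : 0 < ev ⟨kr, hkr⟩)
    (Ubar : Matrix (Fin p) (Fin k) ℝ) (hUbar : ∀ j, inColSpan Pkr (fun i => Ubar i j))
    (Util : Matrix (Fin ρr) (Fin k) ℝ) (hUtil : Util = Mr * Ubar)
    (Unot : Matrix (Fin p) (Fin k) ℝ) (hfeas : Mr * Unot = Util)
    (hmin : ∀ U : Matrix (Fin p) (Fin k) ℝ, Mr * U = Util →
      Matrix.trace (Unotᵀ * Lr * Unot) ≤ Matrix.trace (Uᵀ * Lr * U)) :
    frobNorm (Pkr * Pkrᵀ * Unot - Ubar) ≤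
      Real.sqrt (2 * p / ((ρr : ℝ) * (1 - δ))) *
        Real.sqrt (ev ⟨kr - 1, by omega⟩ / ev ⟨kr, hkr⟩) * frobNorm Ubar := by
  have hδ' : 0 < 1 - δ := sub_pos.mpr hδ.2
  have hmem := mem_map_castLEEmb_univ_iff hkr.le
  have hPkr_orth : Pkrᵀ * Pkr = 1 :=
    hPkr ▸ transpose_submatrix_mul_submatrix hPorth (Fin.castLE_injective hkr.le)
  have hproj : Pkr * Pkrᵀ = spectralProj P (univ.map (Fin.castLEEmb hkr.le)) := by
    rw [hPkr]
    exact submatrix_mul_transpose_submatrix_eq_spectralProj P (Fin.castLEEmb hkr.le)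
  have hrip := mul_frobNorm_sq_le_of_rip hPkr_orth hMr (by positivity)
    (fun z hz => (hRIP z hz).1) hUbar (hfeas.trans hUtil)
  have htail := mul_frobNorm_sub_spectralProj_sq_le_trace hPorth hLrP _ (μ := ev ⟨kr, hkr⟩)
    (fun i _ => nonneg_of_posSemidef_of_mul_eq_mul_diagonal hLr hPorth hLrP i)
    (fun i hi => hev (Fin.le_def.mpr (by have := (hmem i).not.mp hi; simp only; omega))) Unot
  have hhead := trace_le_mul_frobNorm_sq_of_spectralProj_mul_eq hPorth hLrP _
    (lam := ev ⟨kr - 1, by omega⟩)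
    (fun i hi => hev (Fin.le_def.mpr (by have := (hmem i).mp hi; simp only; omega)))
    (hproj ▸ mul_transpose_mul_eq_self_of_inColSpan hPkr_orth hUbar)
  rw [← hproj] at htail
  calc frobNorm (Pkr * Pkrᵀ * Unot - Ubar)
      ≤ √(p / ρr / (1 - δ)) * √(ev ⟨kr - 1, by omega⟩ / ev ⟨kr, hkr⟩) * frobNorm Ubar :=
        le_sqrt_mul_sqrt_mul_of_le_of_le (by positivity) hδ' hlam1
          (Real.sqrt_nonneg _) hrip ((htail.trans (hmin Ubar hUtil.symm)).trans hhead)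
    _ ≤ _ := by
        rw [div_div]
        refine mul_le_mul_of_nonneg_right (mul_le_mul_of_nonneg_right (Real.sqrt_le_sqrt ?_)
          (Real.sqrt_nonneg _)) (Real.sqrt_nonneg _)
        exact div_le_div_of_nonneg_right (by linarith [(Nat.cast_nonneg p : (0 : ℝ) ≤ p)])
          (by positivity)
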